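/- arXiv:2107.05045 — 2 statements merged into one kernel-verified Lean document; each statement's English description precedes it below -/
import Mathlib

section
/- For a μ-strongly convex twice differentiable f, priors π, π′ ∈ (0,1), test cost c′ ∈ (0,1), and r : ℝ^d → [0,∞), the classifier h_{c₀} = sign(πr − c₀) with c₀ = c′π(1−π′) / ( (1−c′)(1−π)π′ + c′π(1−π′) ) satisfies R_{π′,c′}(h_{c₀}) − R*_{π′,c′} ≤ C √( (2/μ) B_f(r* ∥ r) ), where C = π (c′ + π′ − 2c′π′) / (c₀ + π − 2c₀π). -/
/-!
Write `a = (1 - c') π'` and `b = c' (1 - π')`. The test risk of the classifier with positive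
region `S` is `a - (a P₊(S) - b P₋(S))`, and since `P = π P₊ + (1 - π) P₋` and `dP₊ = r* dP`,
`a P₊(S) - b P₋(S) = ∫_S C (r* - c₀/π) dP`. So `{π r* > c₀}` is Bayes optimal and the plug-in
region `{π r > c₀}` loses at most `C ∫ |r* - r| dP`. By Cauchy–Schwarz this is at most
`C (∫ (r* - r)² dP)^{1/2}`, and `μ`-strong convexity of `f` gives
`μ/2 ∫ (r* - r)² dP ≤ B_f(r* ∥ r)`.
-/

open MeasureTheory Real

/-- The sign function mapping to `{±1}`. -/
noncomputable def sgn (x : ℝ) : ℝ := if 0 < x then 1 else -1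

/-- Cost-sensitive classification risk with class-prior `pr` and false-positive cost `c`,
for class-conditional distributions `Pp` (positive) and `Pm` (negative). -/
noncomputable def costRisk {d : ℕ} (Pp Pm : Measure (Fin d → ℝ)) (pr c : ℝ)
    (g : (Fin d → ℝ) → ℝ) : ℝ :=
  (1 - c) * pr * (Pp {x | sgn (g x) ≠ 1}).toReal
    + c * (1 - pr) * (Pm {x | sgn (g x) ≠ -1}).toReal

/-- Bayes-optimal cost-sensitive risk: infimum over all measurable decision functions. -/
noncomputable def bayesRisk {d : ℕ} (Pp Pm : Measure (Fin d → ℝ)) (pr c : ℝ) : ℝ :=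
  ⨅ g : {g : (Fin d → ℝ) → ℝ // Measurable g}, costRisk Pp Pm pr c g.1

/-- Bregman divergence `B_f(r* ∥ r)` weighted by the distribution `P`. -/
noncomputable def bregman {d : ℕ} (P : Measure (Fin d → ℝ)) (f : ℝ → ℝ)
    (rstar r : (Fin d → ℝ) → ℝ) : ℝ :=
  ∫ x, (f (rstar x) - f (r x) - deriv f (r x) * (rstar x - r x)) ∂P

theorem ConvexOn.add_mul_sub_le_of_hasDerivAt {S : Set ℝ} {g : ℝ → ℝ} {g' s t : ℝ}
    (hg : ConvexOn ℝ S g) (hs : s ∈ S) (ht : t ∈ S) (hd : HasDerivAt g g' t) :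
    g t + g' * (s - t) ≤ g s := by
  rcases lt_trichotomy s t with hst | rfl | hts
  · have := hg.slope_le_of_hasDerivAt hs ht hst hd
    rw [slope_def_field, div_le_iff₀ (sub_pos.2 hst)] at this
    linarith
  · simp
  · have := hg.le_slope_of_hasDerivAt ht hs hts hd
    rw [slope_def_field, le_div_iff₀ (sub_pos.2 hts)] at this
    linarith

theorem half_mul_sq_sub_le_of_le_deriv_deriv {D : Set ℝ} (hD : Convex ℝ D) {f : ℝ → ℝ}
    {μ : ℝ} (hf : Differentiable ℝ f) (hf' : Differentiable ℝ (deriv f))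
    (hμ : ∀ x ∈ interior D, μ ≤ deriv (deriv f) x) {s t : ℝ} (hs : s ∈ D) (ht : t ∈ D) :
    μ / 2 * (s - t) ^ 2 ≤ f s - f t - deriv f t * (s - t) := by
  have hg : ∀ u, HasDerivAt (fun u => f u - μ / 2 * u ^ 2) (deriv f u - μ * u) u := fun u =>
    ((hf u).hasDerivAt.fun_sub ((hasDerivAt_pow 2 u).const_mul (μ / 2))).congr_deriv
      (by norm_num; ring)
  have hg' : ∀ u, HasDerivAt (fun u => deriv f u - μ * u) (deriv (deriv f) u - μ) u :=
    fun u => (hf' u).hasDerivAt.fun_sub (by simpa using (hasDerivAt_id u).const_mul μ)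
  have hconv : ConvexOn ℝ D (fun u => f u - μ / 2 * u ^ 2) :=
    convexOn_of_hasDerivWithinAt2_nonneg hD (fun u _ => (hg u).continuousAt.continuousWithinAt)
      (fun u _ => (hg u).hasDerivWithinAt) (fun u _ => (hg' u).hasDerivWithinAt)
      (fun u hu => sub_nonneg.2 (hμ u hu))
  linear_combination hconv.add_mul_sub_le_of_hasDerivAt hs ht (hg t)

theorem sq_sub_le_of_le_deriv_deriv_of_nonneg {f : ℝ → ℝ} {μ : ℝ} (hμ : 0 < μ)
    (hf : ContDiff ℝ 2 f) (hsc : ∀ t, 0 ≤ t → μ ≤ deriv (deriv f) t) {s t : ℝ} (hs : 0 ≤ s)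
    (ht : 0 ≤ t) : (s - t) ^ 2 ≤ 2 / μ * (f s - f t - deriv f t * (s - t)) := by
  have := half_mul_sq_sub_le_of_le_deriv_deriv (convex_Ici 0) (hf.differentiable (by norm_num))
    ((hf.iterate_deriv' 1 1).differentiable (by norm_num))
    (fun t ht => hsc t (interior_subset ht)) hs ht
  rw [div_mul_eq_mul_div, le_div_iff₀ hμ]
  linarith

section Integral

variable {α : Type*} [MeasurableSpace α]

theorem memLp_two_of_sq_le {P : Measure α} {u v : α → ℝ} (hu : AEStronglyMeasurable u P)
    (hv : Integrable v P) (huv : ∀ x, u x ^ 2 ≤ v x) : MemLp u 2 P :=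
  (memLp_two_iff_integrable_sq hu).2 <| hv.mono' (hu.pow 2) <| ae_of_all _ fun x => by
    simpa only [norm_pow, norm_eq_abs, sq_abs] using huv x

theorem integral_abs_le_sqrt_integral_sq {P : Measure α} [IsProbabilityMeasure P] {u : α → ℝ}
    (hu : MemLp u 2 P) : ∫ x, |u x| ∂P ≤ √(∫ x, u x ^ 2 ∂P) := by
  have habs : MemLp (fun x => |u x|) 2 P := hu.abs
  have hvar := ProbabilityTheory.variance_nonneg (fun x => |u x|) P
  rw [ProbabilityTheory.variance_eq_sub habs] at hvar
  simp only [Pi.pow_apply, sq_abs] at hvar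
  exact Real.le_sqrt_of_sq_le (by linarith)

theorem integral_abs_le_sqrt_integral_of_sq_le {P : Measure α} [IsProbabilityMeasure P]
    {u v : α → ℝ} (hu : AEStronglyMeasurable u P) (hv : Integrable v P)
    (huv : ∀ x, u x ^ 2 ≤ v x) : ∫ x, |u x| ∂P ≤ √(∫ x, v x ∂P) :=
  have hu2 := memLp_two_of_sq_le hu hv huv
  (integral_abs_le_sqrt_integral_sq hu2).trans <|
    Real.sqrt_le_sqrt (integral_mono hu2.integrable_sq hv huv)

theorem setIntegral_sub_setIntegral_pos_le {P : Measure α} {ψ φ : α → ℝ} {S : Set α}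
    (hS : MeasurableSet S) (hφ : Measurable φ) (hψ : Integrable ψ P)
    (hψφ : Integrable (fun x => ψ x - φ x) P) :
    ∫ x in S, ψ x ∂P - ∫ x in {x | 0 < φ x}, ψ x ∂P ≤ ∫ x, |ψ x - φ x| ∂P := by
  have hT : MeasurableSet {x | 0 < φ x} := measurableSet_lt measurable_const hφ
  rw [← integral_indicator hS, ← integral_indicator hT,
    ← integral_sub (hψ.indicator hS) (hψ.indicator hT)]
  refine integral_mono ((hψ.indicator hS).sub (hψ.indicator hT)) hψφ.abs fun x => ?_
  by_cases hxS : x ∈ S <;> by_cases hxT : x ∈ {x | 0 < φ x} <;>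
    simp only [Set.indicator_of_mem, Set.indicator_of_notMem, hxS, hxT,
      not_false_eq_true, sub_self, sub_zero, zero_sub, abs_nonneg] <;>
    simp only [Set.mem_ofPred_eq, not_lt] at hxT
  · linarith [le_abs_self (ψ x - φ x)]
  · linarith [neg_abs_le (ψ x - φ x)]

theorem sub_mul_toReal_eq_setIntegral_of_mixture {P Pp Pm : Measure α} [IsFiniteMeasure P]
    [IsFiniteMeasure Pp] [IsFiniteMeasure Pm] {pr a b : ℝ} (hpr : pr ∈ Set.Ioo (0 : ℝ) 1)
    (hmix : P = ENNReal.ofReal pr • Pp + ENNReal.ofReal (1 - pr) • Pm) {rstar : α → ℝ}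
    (hrstar : Integrable rstar P) {S : Set α} (hratio : (Pp S).toReal = ∫ x in S, rstar x ∂P) :
    a * (Pp S).toReal - b * (Pm S).toReal
      = ∫ x in S, ((a + b * pr / (1 - pr)) * rstar x - b / (1 - pr)) ∂P := by
  obtain ⟨hpr0, hpr1⟩ := hpr
  have hPS : (P S).toReal = pr * (Pp S).toReal + (1 - pr) * (Pm S).toReal := by
    simp only [hmix, Measure.coe_add, Pi.add_apply, Measure.smul_apply, smul_eq_mul]
    rw [ENNReal.toReal_add (by finiteness) (by finiteness), ENNReal.toReal_mul,
      ENNReal.toReal_mul, ENNReal.toReal_ofReal hpr0.le, ENNReal.toReal_ofReal (by linarith)]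
  rw [integral_sub (hrstar.restrict.const_mul _) (integrable_const _), integral_const_mul,
    setIntegral_const, smul_eq_mul, measureReal_def, hPS, ← hratio]
  field_simp [(sub_pos.2 hpr1).ne']
  ring

end Integral

theorem sgn_eq_one_iff {x : ℝ} : sgn x = 1 ↔ 0 < x := by
  unfold sgn; split_ifs with h <;> norm_num [h]

theorem sgn_eq_neg_one_iff {x : ℝ} : sgn x = -1 ↔ ¬0 < x := by
  unfold sgn; split_ifs with h <;> norm_num [h]

theorem costRisk_eq_sub {d : ℕ} (Pp Pm : Measure (Fin d → ℝ)) [IsProbabilityMeasure Pp]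
    (pr c : ℝ) {g : (Fin d → ℝ) → ℝ} (hg : Measurable g) :
    costRisk Pp Pm pr c g = (1 - c) * pr
      - ((1 - c) * pr * (Pp {x | 0 < g x}).toReal - c * (1 - pr) * (Pm {x | 0 < g x}).toReal) := by
  have hS : MeasurableSet {x | 0 < g x} := measurableSet_lt measurable_const hg
  have hneg : {x | sgn (g x) ≠ 1} = {x | 0 < g x}ᶜ := by ext; simp [sgn_eq_one_iff]
  have hpos : {x | sgn (g x) ≠ -1} = {x | 0 < g x} := by ext; simp [sgn_eq_neg_one_iff]
  rw [costRisk, hneg, hpos, ← measureReal_def, probReal_compl_eq_one_sub hS, measureReal_def]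
  ring

theorem sub_bayesRisk_le {d : ℕ} {Pp Pm : Measure (Fin d → ℝ)} {pr c ε : ℝ}
    {h : (Fin d → ℝ) → ℝ}
    (hh : ∀ g, Measurable g → costRisk Pp Pm pr c h - costRisk Pp Pm pr c g ≤ ε) :
    costRisk Pp Pm pr c h - bayesRisk Pp Pm pr c ≤ ε := by
  have : Nonempty {g : (Fin d → ℝ) → ℝ // Measurable g} := ⟨⟨0, measurable_const⟩⟩
  exact sub_le_comm.1 <| le_ciInf fun g => sub_le_comm.1 (hh g.1 g.2)

theorem prior_shift_coefficients {pr pr' c' c0 C : ℝ} (hpr : pr ∈ Set.Ioo (0 : ℝ) 1)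
    (hpr' : pr' ∈ Set.Ioo (0 : ℝ) 1) (hc' : c' ∈ Set.Ioo (0 : ℝ) 1)
    (hc0 : c0 = c' * pr * (1 - pr') / ((1 - c') * (1 - pr) * pr' + c' * pr * (1 - pr')))
    (hC : C = pr * (c' + pr' - 2 * c' * pr') / (c0 + pr - 2 * c0 * pr)) :
    (1 - c') * pr' + c' * (1 - pr') * pr / (1 - pr) = C ∧
      c' * (1 - pr') / (1 - pr) = C * (c0 / pr) ∧ 0 < C := by
  obtain ⟨hpr0, hpr1⟩ := hpr
  obtain ⟨hpr'0, hpr'1⟩ := hpr'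
  obtain ⟨hc'0, hc'1⟩ := hc'
  have h1pr : 0 < 1 - pr := sub_pos.2 hpr1
  have hA : 0 < (1 - c') * (1 - pr) * pr' + c' * pr * (1 - pr') := by
    have : 0 < 1 - c' := sub_pos.2 hc'1
    have : 0 < 1 - pr' := sub_pos.2 hpr'1
    positivity
  have hden : c0 + pr - 2 * c0 * pr = pr * (1 - pr) * (c' + pr' - 2 * c' * pr')
      / ((1 - c') * (1 - pr) * pr' + c' * pr * (1 - pr')) := by
    rw [hc0]; field_simp; ring
  have hsum : 0 < c' + pr' - 2 * c' * pr' := by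
    nlinarith [mul_pos hc'0 (sub_pos.2 hpr'1), mul_pos (sub_pos.2 hc'1) hpr'0]
  have hCA : C = ((1 - c') * (1 - pr) * pr' + c' * pr * (1 - pr')) / (1 - pr) := by
    rw [hC, hden]
    field_simp
    exact div_self (by linarith)
  rw [hCA, hc0]
  refine ⟨by field_simp, by field_simp, by positivity⟩

/-- excess risk bound under class-prior shift. -/
theorem excess_risk_prior_shift {d : ℕ} (Pp Pm P : Measure (Fin d → ℝ))
    [IsProbabilityMeasure Pp] [IsProbabilityMeasure Pm] [IsProbabilityMeasure P]
    (pr pr' c' μ : ℝ) (hpr : pr ∈ Set.Ioo (0:ℝ) 1) (hpr' : pr' ∈ Set.Ioo (0:ℝ) 1)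
    (hc' : c' ∈ Set.Ioo (0:ℝ) 1) (hμ : 0 < μ)
    (f : ℝ → ℝ) (hf : ContDiff ℝ 2 f)
    (hsc : ∀ t, 0 ≤ t → μ ≤ deriv (deriv f) t)
    (rstar r : (Fin d → ℝ) → ℝ) (hrstar : Measurable rstar) (hr : Measurable r)
    (hrstar0 : ∀ x, 0 ≤ rstar x) (hr0 : ∀ x, 0 ≤ r x)
    (hmix : P = ENNReal.ofReal pr • Pp + ENNReal.ofReal (1 - pr) • Pm)
    (hratio : ∀ S : Set (Fin d → ℝ), MeasurableSet S →
      (Pp S).toReal = ∫ x in S, rstar x ∂P)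
    (hint : Integrable
      (fun x => f (rstar x) - f (r x) - deriv f (r x) * (rstar x - r x)) P)
    (c0 C : ℝ)
    (hc0 : c0 = c' * pr * (1 - pr') / ((1 - c') * (1 - pr) * pr' + c' * pr * (1 - pr')))
    (hC : C = pr * (c' + pr' - 2 * c' * pr') / (c0 + pr - 2 * c0 * pr)) :
    costRisk Pp Pm pr' c' (fun x => pr * r x - c0) - bayesRisk Pp Pm pr' c'
      ≤ C * Real.sqrt ((2 / μ) * bregman P f rstar r) := by
  obtain ⟨hCa, hCb, hC0⟩ := prior_shift_coefficients hpr hpr' hc' hc0 hC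
  have hIrstar : Integrable rstar P := Integrable.of_integral_ne_zero <| by
    rw [← setIntegral_univ, ← hratio _ .univ]; simp
  set ψ := fun x => C * (rstar x - c0 / pr)
  set φ := fun x => C * (r x - c0 / pr)
  have hrisk : ∀ g, Measurable g →
      costRisk Pp Pm pr' c' g = (1 - c') * pr' - ∫ x in {x | 0 < g x}, ψ x ∂P := fun g hg => by
    rw [costRisk_eq_sub Pp Pm pr' c' hg, sub_mul_toReal_eq_setIntegral_of_mixture hpr hmix hIrstar
      (hratio _ (measurableSet_lt measurable_const hg)), hCa, hCb]
    simp only [ψ, mul_sub]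
  have hset : {x | 0 < pr * r x - c0} = {x | 0 < φ x} := by
    ext x
    simp only [Set.mem_ofPred_eq, φ, mul_pos_iff_of_pos_left hC0, sub_pos, div_lt_iff₀' hpr.1]
  have hgap : ∀ x, (rstar x - r x) ^ 2 ≤
      2 / μ * (f (rstar x) - f (r x) - deriv f (r x) * (rstar x - r x)) :=
    fun x => sq_sub_le_of_le_deriv_deriv_of_nonneg hμ hf hsc (hrstar0 x) (hr0 x)
  have hdiff : AEStronglyMeasurable (fun x => rstar x - r x) P :=
    (hrstar.sub hr).aestronglyMeasurable
  have hψφ : ∀ x, ψ x - φ x = C * (rstar x - r x) := fun x => by ring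
  refine sub_bayesRisk_le fun g hg => ?_
  rw [hrisk g hg, hrisk _ ((hr.const_mul pr).sub_const c0), hset]
  calc _ = ∫ x in {x | 0 < g x}, ψ x ∂P - ∫ x in {x | 0 < φ x}, ψ x ∂P := by ring
    _ ≤ ∫ x, |ψ x - φ x| ∂P :=
      setIntegral_sub_setIntegral_pos_le (measurableSet_lt measurable_const hg) (by fun_prop)
        ((hIrstar.sub (integrable_const _)).const_mul C)
        (by simpa only [hψφ] using
          ((memLp_two_of_sq_le hdiff (hint.const_mul _) hgap).integrable one_le_two).const_mul C)
    _ = C * ∫ x, |rstar x - r x| ∂P := by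
      simp only [hψφ, abs_mul, abs_of_pos hC0, integral_const_mul]
    _ ≤ C * √((2 / μ) * bregman P f rstar r) := by
      gcongr
      simpa only [bregman, integral_const_mul] using
        integral_abs_le_sqrt_integral_of_sq_le hdiff (hint.const_mul _) hgap
end

section
/- L¹-bound on excess cost-sensitive risk: for any π ∈ (0,1), c ∈ (0,1), and r : ℝ^d → [0,∞), R_{π,c}(sign(πr − c)) − R*_{π,c} ≤ π E_X[ |r*(X) − r(X)| ], where r* = p_+/p. -/
open MeasureTheory Real

/-
Write `φ = π r* - c` and `ψ = π r - c`. Since `P = π P₊ + (1 - π) P₋` and `dP₊ = r* dP`,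
a rule predicting `-1` exactly on `S` costs `∫_S φ dP + c ∫ (1 - π r*) dP`, so the Bayes risk
is at least `∫ min φ 0 dP + c ∫ (1 - π r*) dP`. The plug-in rule predicts `-1` on `{ψ ≤ 0}`,
and pointwise `1_{ψ ≤ 0} φ ≤ min φ 0 + |φ - ψ|`, with `|φ - ψ| = π |r* - r|`.
-/

lemma sgn_ne_one_iff {x : ℝ} : sgn x ≠ 1 ↔ x ≤ 0 := by
  unfold sgn; split_ifs <;> norm_num <;> linarith

lemma sgn_ne_neg_one_iff {x : ℝ} : sgn x ≠ -1 ↔ 0 < x := by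
  unfold sgn; split_ifs <;> norm_num <;> linarith

section SetIntegral

variable {α : Type*} [MeasurableSpace α] {μ : Measure α} {φ ψ : α → ℝ}

lemma MeasureTheory.Integrable.min_zero (hφ : Integrable φ μ) : Integrable (fun x => min (φ x) 0) μ :=
  hφ.inf (integrable_zero α ℝ μ)

lemma integral_min_zero_le_setIntegral (hφ : Integrable φ μ) {S : Set α} (hS : MeasurableSet S) :
    ∫ x, min (φ x) 0 ∂μ ≤ ∫ x in S, φ x ∂μ := by
  rw [← integral_indicator hS]
  refine integral_mono hφ.min_zero (hφ.indicator hS) fun x => ?_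
  by_cases hx : x ∈ S <;> simp [hx]

lemma setIntegral_le_integral_min_zero_add_integral_abs_sub (hφ : Integrable φ μ)
    (hφψ : Integrable (fun x => |φ x - ψ x|) μ) (hψ : MeasurableSet {x | ψ x ≤ 0}) :
    ∫ x in {x | ψ x ≤ 0}, φ x ∂μ ≤ ∫ x, min (φ x) 0 ∂μ + ∫ x, |φ x - ψ x| ∂μ := by
  rw [← integral_indicator hψ, ← integral_add hφ.min_zero hφψ]
  refine integral_mono (hφ.indicator hψ) (hφ.min_zero.add hφψ) fun x => ?_
  simp only [Set.indicator_apply, Set.mem_ofPred_eq]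
  split_ifs <;> cases abs_cases (φ x - ψ x) <;> cases min_cases (φ x) 0 <;> linarith

end SetIntegral

section Mixture

variable {α : Type*} [MeasurableSpace α] {Pp Pm P : Measure α}
  [IsFiniteMeasure Pp] [IsFiniteMeasure Pm] {pr : ℝ} {rstar : α → ℝ}

lemma toReal_apply_of_eq_mixture (hpr0 : 0 ≤ pr) (hpr1 : pr ≤ 1)
    (hmix : P = ENNReal.ofReal pr • Pp + ENNReal.ofReal (1 - pr) • Pm) (S : Set α) :
    (P S).toReal = pr * (Pp S).toReal + (1 - pr) * (Pm S).toReal := by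
  rw [hmix, Measure.add_apply, Measure.smul_apply, Measure.smul_apply, smul_eq_mul, smul_eq_mul,
    ENNReal.toReal_add (by finiteness) (by finiteness), ENNReal.toReal_mul, ENNReal.toReal_mul,
    ENNReal.toReal_ofReal hpr0, ENNReal.toReal_ofReal (sub_nonneg.2 hpr1)]

lemma setIntegral_one_sub_mul [IsFiniteMeasure P] (hrstar : Integrable rstar P) (S : Set α) :
    ∫ x in S, (1 - pr * rstar x) ∂P = (P S).toReal - pr * ∫ x in S, rstar x ∂P := by
  rw [integral_sub (integrable_const 1).integrableOn (hrstar.const_mul pr).integrableOn,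
    integral_const_mul, setIntegral_const, smul_eq_mul, mul_one, Measure.real_def]

lemma one_sub_mul_toReal_apply_eq_setIntegral [IsFiniteMeasure P] (hpr0 : 0 ≤ pr) (hpr1 : pr ≤ 1)
    (hmix : P = ENNReal.ofReal pr • Pp + ENNReal.ofReal (1 - pr) • Pm)
    (hratio : ∀ S, MeasurableSet S → (Pp S).toReal = ∫ x in S, rstar x ∂P)
    (hrstar : Integrable rstar P) {S : Set α} (hS : MeasurableSet S) :
    (1 - pr) * (Pm S).toReal = ∫ x in S, (1 - pr * rstar x) ∂P := by
  rw [setIntegral_one_sub_mul hrstar, ← hratio S hS, toReal_apply_of_eq_mixture hpr0 hpr1 hmix]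
  ring

lemma mixture_cost_eq_setIntegral [IsFiniteMeasure P] (c : ℝ) (hpr0 : 0 ≤ pr) (hpr1 : pr ≤ 1)
    (hmix : P = ENNReal.ofReal pr • Pp + ENNReal.ofReal (1 - pr) • Pm)
    (hratio : ∀ S, MeasurableSet S → (Pp S).toReal = ∫ x in S, rstar x ∂P)
    (hrstar : Integrable rstar P) {S : Set α} (hS : MeasurableSet S) :
    (1 - c) * pr * (Pp S).toReal + c * (1 - pr) * (Pm Sᶜ).toReal
      = ∫ x in S, (pr * rstar x - c) ∂P + c * ∫ x, (1 - pr * rstar x) ∂P := by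
  have hPm := one_sub_mul_toReal_apply_eq_setIntegral hpr0 hpr1 hmix hratio hrstar hS.compl
  have hsplit : ∫ x in S, (1 - pr * rstar x) ∂P + ∫ x in Sᶜ, (1 - pr * rstar x) ∂P
      = ∫ x, (1 - pr * rstar x) ∂P :=
    integral_add_compl hS ((integrable_const 1).sub (hrstar.const_mul pr))
  have hφ : ∫ x in S, (pr * rstar x - c) ∂P = pr * ∫ x in S, rstar x ∂P - c * (P S).toReal := by
    rw [integral_sub (hrstar.const_mul pr).integrableOn (integrable_const c).integrableOn,
      integral_const_mul, setIntegral_const, smul_eq_mul, Measure.real_def, mul_comm c]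
  rw [hratio S hS, mul_assoc c, hPm, hφ, ← hsplit, setIntegral_one_sub_mul hrstar S]
  ring

end Mixture

section CostRisk

variable {d : ℕ} {Pp Pm P : Measure (Fin d → ℝ)}
  [IsFiniteMeasure Pp] [IsFiniteMeasure Pm] [IsFiniteMeasure P]
  {pr c : ℝ} {rstar : (Fin d → ℝ) → ℝ}

lemma costRisk_eq_setIntegral (hpr0 : 0 ≤ pr) (hpr1 : pr ≤ 1)
    (hmix : P = ENNReal.ofReal pr • Pp + ENNReal.ofReal (1 - pr) • Pm)
    (hratio : ∀ S, MeasurableSet S → (Pp S).toReal = ∫ x in S, rstar x ∂P)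
    (hrstar : Integrable rstar P) {g : (Fin d → ℝ) → ℝ} (hg : Measurable g) :
    costRisk Pp Pm pr c g
      = ∫ x in {x | g x ≤ 0}, (pr * rstar x - c) ∂P + c * ∫ x, (1 - pr * rstar x) ∂P := by
  have hreject : {x | sgn (g x) ≠ 1} = {x | g x ≤ 0} := by ext; exact sgn_ne_one_iff
  have haccept : {x | sgn (g x) ≠ -1} = {x | g x ≤ 0}ᶜ := by ext; simp [sgn_ne_neg_one_iff]
  rw [costRisk, hreject, haccept]
  exact mixture_cost_eq_setIntegral c hpr0 hpr1 hmix hratio hrstar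
    (measurableSet_le hg measurable_const)

lemma integral_min_zero_add_le_bayesRisk (hpr0 : 0 ≤ pr) (hpr1 : pr ≤ 1)
    (hmix : P = ENNReal.ofReal pr • Pp + ENNReal.ofReal (1 - pr) • Pm)
    (hratio : ∀ S, MeasurableSet S → (Pp S).toReal = ∫ x in S, rstar x ∂P)
    (hrstar : Integrable rstar P) :
    ∫ x, min (pr * rstar x - c) 0 ∂P + c * ∫ x, (1 - pr * rstar x) ∂P
      ≤ bayesRisk Pp Pm pr c := by
  have : Nonempty {g : (Fin d → ℝ) → ℝ // Measurable g} := ⟨⟨0, measurable_const⟩⟩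
  refine le_ciInf fun g => ?_
  rw [costRisk_eq_setIntegral hpr0 hpr1 hmix hratio hrstar g.2]
  gcongr
  exact integral_min_zero_le_setIntegral ((hrstar.const_mul pr).sub (integrable_const c))
    (measurableSet_le g.2 measurable_const)

end CostRisk

theorem excess_risk_l1_bound_general {d : ℕ} (Pp Pm P : Measure (Fin d → ℝ))
    [IsProbabilityMeasure Pp] [IsProbabilityMeasure Pm] [IsProbabilityMeasure P]
    (pr c : ℝ) (hpr : pr ∈ Set.Ioo (0:ℝ) 1)
    (rstar r : (Fin d → ℝ) → ℝ) (hr : Measurable r)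
    (hmix : P = ENNReal.ofReal pr • Pp + ENNReal.ofReal (1 - pr) • Pm)
    (hratio : ∀ S : Set (Fin d → ℝ), MeasurableSet S →
      (Pp S).toReal = ∫ x in S, rstar x ∂P)
    (hint : Integrable (fun x => |rstar x - r x|) P) :
    costRisk Pp Pm pr c (fun x => pr * r x - c) - bayesRisk Pp Pm pr c
      ≤ pr * ∫ x, |rstar x - r x| ∂P := by
  obtain ⟨hpr0, hpr1⟩ := hpr
  have hrstar : Integrable rstar P := Integrable.of_integral_ne_zero <| by
    rw [← setIntegral_univ, ← hratio _ MeasurableSet.univ, measure_univ]; norm_num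
  have hdiff : (fun x => |(pr * rstar x - c) - (pr * r x - c)|)
      = fun x => pr * |rstar x - r x| := by
    ext x; rw [sub_sub_sub_cancel_right, ← mul_sub, abs_mul, abs_of_pos hpr0]
  have hplugin := setIntegral_le_integral_min_zero_add_integral_abs_sub
    (φ := fun x => pr * rstar x - c) (ψ := fun x => pr * r x - c)
    ((hrstar.const_mul pr).sub (integrable_const c)) (hdiff ▸ hint.const_mul pr)
    (measurableSet_le (hr.const_mul pr |>.sub_const c) measurable_const)
  rw [hdiff, integral_const_mul] at hplugin
  have hbayes := integral_min_zero_add_le_bayesRisk (c := c) hpr0.le hpr1.le hmix hratio hrstar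
  rw [costRisk_eq_setIntegral hpr0.le hpr1.le hmix hratio hrstar (by fun_prop)]
  linarith

/-- L¹-bound on the excess cost-sensitive risk. -/
theorem excess_risk_l1_bound {d : ℕ} (Pp Pm P : Measure (Fin d → ℝ))
    [IsProbabilityMeasure Pp] [IsProbabilityMeasure Pm] [IsProbabilityMeasure P]
    (pr c : ℝ) (hpr : pr ∈ Set.Ioo (0:ℝ) 1) (hc : c ∈ Set.Ioo (0:ℝ) 1)
    (rstar r : (Fin d → ℝ) → ℝ) (hrstar : Measurable rstar) (hr : Measurable r)
    (hrstar0 : ∀ x, 0 ≤ rstar x) (hr0 : ∀ x, 0 ≤ r x)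
    (hmix : P = ENNReal.ofReal pr • Pp + ENNReal.ofReal (1 - pr) • Pm)
    (hratio : ∀ S : Set (Fin d → ℝ), MeasurableSet S →
      (Pp S).toReal = ∫ x in S, rstar x ∂P)
    (hint : Integrable (fun x => |rstar x - r x|) P) :
    costRisk Pp Pm pr c (fun x => pr * r x - c) - bayesRisk Pp Pm pr c
      ≤ pr * ∫ x, |rstar x - r x| ∂P :=
  excess_risk_l1_bound_general Pp Pm P pr c hpr rstar r hr hmix hratio hint
end
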